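/- arXiv:2407.08360 — 5 statements merged into one kernel-verified Lean document; each statement's English description precedes it below -/
import Mathlib

section
/- Let a, b, c ∈ ℤ and suppose there exists a prime p such that none of the integers ac, bc, (a+b)c is a quadratic residue modulo p. Then the equation a x^2 + b y^2 = c z^2 is not partition regular with respect to (x, y): there exists a coloring of the positive integers with finitely many colors such that there are no distinct positive integers x, y of the same color and positive integer z with a x^2 + b y^2 = c z^2. -/
/-!
Colour `n = p ^ v * u` with `p ∤ u` by `u mod p`. If `x`, `y` share a colour, `v_p(x) ≤ v_p(y)` and
`a x² + b y² = c z²`, then `ac x² + bc y² = (cz)²`; dividing by `p ^ (2 v_p(x))` leaves an integer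
square. Modulo `p` the unit parts of `x` and `y` agree, so `(a + b) c` (if `v_p(x) = v_p(y)`) or `ac`
(otherwise) times a nonzero square is a square modulo `p`.
-/

theorem Int.isSquare_of_isSquare_sq_mul {d N : ℤ} (hd : d ≠ 0) (h : IsSquare (d ^ 2 * N)) :
    IsSquare N := by
  obtain ⟨m, hm⟩ := h
  obtain ⟨k, rfl⟩ : d ∣ m := (Int.pow_dvd_pow_iff two_ne_zero).mp ⟨N, by rw [sq m, ← hm]⟩
  exact ⟨k, mul_left_cancel₀ (pow_ne_zero 2 hd) (by linear_combination hm)⟩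

theorem isSquare_of_isSquare_mul_sq {G₀ : Type*} [CommGroupWithZero G₀] {a u : G₀} (hu : u ≠ 0)
    (h : IsSquare (a * u ^ 2)) : IsSquare a := by
  simpa [hu] using h.div (IsSquare.sq u)

section

variable {p : ℕ} [Fact p.Prime]

theorem ZMod.isSquare_of_isSquare_add_mul_sq {A B : ℤ} {u w α δ : ℕ}
    (hu : (u : ZMod p) ≠ 0) (huw : (u : ZMod p) = w)
    (h : IsSquare (A * ((p ^ α * u : ℕ) : ℤ) ^ 2 + B * ((p ^ (α + δ) * w : ℕ) : ℤ) ^ 2)) :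
    IsSquare ((A + B * p ^ (2 * δ) : ℤ) : ZMod p) := by
  have hfactor : A * ((p ^ α * u : ℕ) : ℤ) ^ 2 + B * ((p ^ (α + δ) * w : ℕ) : ℤ) ^ 2
      = ((p : ℤ) ^ α) ^ 2 * (A * u ^ 2 + B * p ^ (2 * δ) * w ^ 2) := by
    push_cast; ring
  rw [hfactor] at h
  have hp : (p : ℤ) ^ α ≠ 0 := pow_ne_zero _ (by exact_mod_cast (Fact.out : p.Prime).ne_zero)
  have hmod := (Int.isSquare_of_isSquare_sq_mul hp h).map (Int.castRingHom (ZMod p))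
  have hcast : Int.castRingHom (ZMod p) (A * u ^ 2 + B * p ^ (2 * δ) * w ^ 2)
      = ((A + B * p ^ (2 * δ) : ℤ) : ZMod p) * (u : ZMod p) ^ 2 := by
    rw [eq_intCast]
    push_cast [← huw]
    ring
  exact isSquare_of_isSquare_mul_sq hu (hcast ▸ hmod)

theorem not_isSquare_of_factorization_le {A B : ℤ} {x y : ℕ}
    (hA : ¬IsSquare (A : ZMod p)) (hAB : ¬IsSquare ((A + B : ℤ) : ZMod p))
    (hx : x ≠ 0) (hle : x.factorization p ≤ y.factorization p)
    (hcol : ((ordCompl[p] x : ℕ) : ZMod p) = (ordCompl[p] y : ℕ)) :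
    ¬IsSquare (A * (x : ℤ) ^ 2 + B * (y : ℤ) ^ 2) := by
  intro h
  obtain ⟨δ, hδ⟩ := Nat.exists_eq_add_of_le hle
  have hu : ((ordCompl[p] x : ℕ) : ZMod p) ≠ 0 := by
    rw [Ne, ZMod.natCast_eq_zero_iff]
    exact Nat.not_dvd_ordCompl Fact.out hx
  have hsq := ZMod.isSquare_of_isSquare_add_mul_sq (δ := δ) hu hcol (by
    rwa [Nat.ordProj_mul_ordCompl_eq_self, ← hδ, Nat.ordProj_mul_ordCompl_eq_self])
  rcases Nat.eq_zero_or_pos δ with rfl | hδ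
  · exact hAB (by simpa using hsq)
  · exact hA (by simpa [hδ.ne'] using hsq)

end

theorem stmt15 (a b c : ℤ) (p : ℕ) (hp : p.Prime)
    (h1 : ¬ ∃ x : ZMod p, x ^ 2 = ((a * c : ℤ) : ZMod p))
    (h2 : ¬ ∃ x : ZMod p, x ^ 2 = ((b * c : ℤ) : ZMod p))
    (h3 : ¬ ∃ x : ZMod p, x ^ 2 = (((a + b) * c : ℤ) : ZMod p)) :
    ∃ (r : ℕ) (col : ℕ → Fin r),
      ¬ ∃ x y z : ℕ, 0 < x ∧ 0 < y ∧ 0 < z ∧ x ≠ y ∧ col x = col y ∧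
        a * (x : ℤ) ^ 2 + b * (y : ℤ) ^ 2 = c * (z : ℤ) ^ 2 := by
  have := Fact.mk hp
  have not_isSquare {k : ℤ} (hk : ¬ ∃ x : ZMod p, x ^ 2 = (k : ZMod p)) : ¬IsSquare (k : ZMod p) :=
    fun ⟨r, hr⟩ => hk ⟨r, by rw [hr, sq]⟩
  have hsum : ¬IsSquare ((a * c + b * c : ℤ) : ZMod p) := by rw [← add_mul]; exact not_isSquare h3
  refine ⟨p, fun n => ⟨ordCompl[p] n % p, Nat.mod_lt _ hp.pos⟩, ?_⟩
  rintro ⟨x, y, z, hx, hy, -, -, hcol, heq⟩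
  have hcol : ((ordCompl[p] x : ℕ) : ZMod p) = (ordCompl[p] y : ℕ) := by
    rw [← ZMod.natCast_mod _ p, ← ZMod.natCast_mod (ordCompl[p] y) p]
    exact congrArg _ (Fin.mk.inj_iff.mp hcol)
  have hsq : IsSquare (a * c * (x : ℤ) ^ 2 + b * c * (y : ℤ) ^ 2) :=
    ⟨c * z, by linear_combination c * heq⟩
  rcases le_total (x.factorization p) (y.factorization p) with hle | hle
  · exact not_isSquare_of_factorization_le (not_isSquare h1) hsum hx.ne' hle hcol hsq
  · refine not_isSquare_of_factorization_le (not_isSquare h2) (by rwa [add_comm]) hy.ne' hle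
      hcol.symm ?_
    rwa [add_comm]
end

section
/- Let a, b, c ∈ ℤ and assume that the equation a x^2 + b y^2 = c z^2 is partition regular with respect to (x, y). Then at least one of the integers ac, bc, (a+b)c, ab(a+b)c is a perfect square. -/
/-!
If none of `ac`, `bc`, `(a+b)c`, `ab(a+b)c` is a square, then `ac`, `bc`, `(a+b)c` and their
product `c² · ab(a+b)c` are all non-squares. Jacobi symbols, quadratic reciprocity and Dirichlet's
theorem then give a prime `p` modulo which `ac`, `bc` and `(a+b)c` are all non-residues. Colour
`n = p^k m` with `p ∤ m` by `m mod p`. For a solution of `ax² + by² = cz²` with `x` and `y` of the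
same colour, compare the `p`-adic valuations of `x` and `y`. Divide the equation by the largest
power of `p` and reduce mod `p`: this makes `ac` a square mod `p` if `v(x) < v(y)` and `bc` one if
`v(x) > v(y)`. If the valuations are equal, the parts prime to `p` agree mod `p`, and `(a+b)c` is
a square mod `p`.
-/

open NumberTheorySymbols

theorem eq_of_pow_mul_eq_pow_mul {M : Type*} [CommMonoidWithZero M] [IsCancelMulZero M]
    {p a b : M} {m n : ℕ} (hp : p ≠ 0) (ha : ¬p ∣ a) (hb : ¬p ∣ b)
    (h : p ^ m * a = p ^ n * b) : m = n := by
  wlog hmn : m ≤ n generalizing m n a b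
  · exact (this hb ha h.symm (le_of_not_ge hmn)).symm
  obtain ⟨k, rfl⟩ := Nat.exists_eq_add_of_le hmn
  rw [pow_add, mul_assoc, mul_right_inj' (pow_ne_zero m hp)] at h
  rcases k with _ | k
  · rfl
  · exact (ha (h ▸ dvd_mul_of_dvd_left (dvd_pow_self p k.succ_ne_zero) b)).elim

theorem Int.isSquare_of_isSquare_sq_mul_s16 {c x : ℤ} (hc : c ≠ 0) (h : IsSquare (c ^ 2 * x)) :
    IsSquare x := by
  obtain ⟨k, hk⟩ := h
  obtain ⟨l, rfl⟩ : c ∣ k := (Int.pow_dvd_pow_iff two_ne_zero).mp ⟨x, by rw [hk]; ring⟩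
  exact ⟨l, mul_left_cancel₀ (pow_ne_zero 2 hc) (by rw [hk]; ring)⟩

theorem Nat.exists_prime_ne_two_dvd_of_squarefree {n : ℕ} (hn : Squarefree n) (h1 : n ≠ 1)
    (h2 : n ≠ 2) : ∃ q, q.Prime ∧ q ≠ 2 ∧ q ∣ n := by
  by_contra! h
  have hpow := Nat.eq_prime_pow_of_unique_prime_dvd hn.ne_zero fun hq hqn => by
    by_contra hq2
    exact h _ hq hq2 hqn
  rcases Nat.lt_or_ge n.primeFactorsList.length 2 with hk | hk
  · interval_cases hk : n.primeFactorsList.length <;> simp_all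
  · rw [hpow, Nat.squarefree_pow_iff (by norm_num) (by omega)] at hn
    omega

theorem Nat.exists_modEq_eight_coprime {M : ℕ} (hM : M ≠ 0) {r : ℕ} (hr : Odd r) :
    ∃ n, n ≡ r [MOD 8] ∧ n.Coprime M := by
  obtain ⟨e, K, hK, rfl⟩ := Nat.exists_eq_two_pow_mul_odd hM
  obtain ⟨n, hn1, hn8⟩ :=
    Nat.chineseRemainder ((Nat.coprime_two_right.mpr hK).pow_right 3) 1 r
  have hn2 : n.Coprime 2 := Nat.coprime_two_right.mpr <| Nat.odd_iff.mpr <| by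
    rw [Nat.odd_iff] at hr
    unfold Nat.ModEq at hn8
    omega
  refine ⟨n, hn8, Nat.Coprime.mul_right (hn2.pow_right e) ?_⟩
  rw [Nat.Coprime, hn1.gcd_eq, Nat.gcd_one_left]

set_option maxRecDepth 10000 in
theorem ZMod.exists_sum_eq_one (e : Fin 4 → Fin 3 → ZMod 2) (h₀ : ∑ i, e 0 i = 1)
    (h : ∀ i, e i.succ i = 1) : ∃ s : Finset (Fin 4), ∑ j ∈ s, e j = 1 := by
  revert e
  decide +kernel

theorem Finset.prod_uzpow_eq_uzpow_sum {ι : Type*} (s : Finset ι) (u : ℤˣ)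
    (f : ι → ZMod 2) : ∏ i ∈ s, u ^ f i = u ^ ∑ i ∈ s, f i := by
  classical
  induction s using Finset.induction_on with
  | empty => simp
  | insert j s hj ih => rw [prod_insert hj, sum_insert hj, ih, uzpow_add]

theorem Int.units_exists_prod_eq_neg_one (σ : Fin 4 → Fin 3 → ℤˣ)
    (h₀ : ∏ i, σ 0 i = -1) (h : ∀ i, σ i.succ i = -1) :
    ∃ s : Finset (Fin 4), ∏ j ∈ s, σ j = -1 := by
  set e : Fin 4 → Fin 3 → ZMod 2 := fun j i => if σ j i = 1 then 0 else 1
  have hσ (j i) : σ j i = (-1) ^ e j i := by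
    rcases Int.units_eq_one_or (σ j i) with h | h <;> simp [e, h]
  have hneg : ∀ x : ZMod 2, (-1 : ℤˣ) ^ x = -1 → x = 1 := by decide
  obtain ⟨s, hs⟩ := ZMod.exists_sum_eq_one e
    (hneg _ ((Finset.prod_uzpow_eq_uzpow_sum _ _ _).symm.trans
      ((Finset.prod_congr rfl fun i _ => (hσ 0 i).symm).trans h₀)))
    (fun i => hneg _ (by rw [← hσ, h]))
  refine ⟨s, funext fun i => ?_⟩
  rw [Finset.prod_apply, Finset.prod_congr rfl fun j _ => hσ j i,
    Finset.prod_uzpow_eq_uzpow_sum, ← Finset.sum_apply, hs]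
  simp

namespace ZMod

variable {p : ℕ} [Fact p.Prime]

theorem isSquare_mul_of_pow_mul_eq_pow_mul {e : ZMod p} {S c u t : ℤ} {m n : ℕ}
    (hS : (S : ZMod p) = e * u ^ 2) (hu : (u : ZMod p) ≠ 0) (ht : (t : ZMod p) ≠ 0)
    (h : (p : ℤ) ^ m * S = p ^ n * (c * t ^ 2)) : IsSquare (e * c) := by
  by_cases hec : e * c = 0
  · exact hec ▸ IsSquare.zero
  obtain ⟨he, hc⟩ := mul_ne_zero_iff.mp hec
  have hp : (p : ℤ) ≠ 0 := by exact_mod_cast (Fact.out : p.Prime).ne_zero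
  have hpS : ¬(p : ℤ) ∣ S := by
    rw [← intCast_zmod_eq_zero_iff_dvd, hS]
    exact mul_ne_zero he (pow_ne_zero 2 hu)
  have hpT : ¬(p : ℤ) ∣ c * t ^ 2 := by
    rw [← intCast_zmod_eq_zero_iff_dvd]
    push_cast
    exact mul_ne_zero hc (pow_ne_zero 2 ht)
  obtain rfl := eq_of_pow_mul_eq_pow_mul hp hpS hpT h
  have hST : e * u ^ 2 = c * t ^ 2 := by
    rw [← hS, mul_left_cancel₀ (pow_ne_zero m hp) h]
    push_cast
    ring
  refine ⟨c * t / u, ?_⟩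
  rw [div_mul_div_comm, eq_div_iff (mul_ne_zero hu hu)]
  linear_combination c * hST

theorem isSquare_mul_of_lt {a b c u w t : ℤ} {α β γ : ℕ} (hu : (u : ZMod p) ≠ 0)
    (ht : (t : ZMod p) ≠ 0) (hαβ : α < β)
    (h : a * (p ^ α * u) ^ 2 + b * (p ^ β * w) ^ 2 = c * (p ^ γ * t) ^ 2) :
    IsSquare ((a * c : ℤ) : ZMod p) := by
  obtain ⟨k, rfl⟩ := Nat.exists_eq_add_of_lt hαβ
  push_cast
  refine isSquare_mul_of_pow_mul_eq_pow_mul (S := a * u ^ 2 + b * (p ^ (k + 1) * w) ^ 2)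
    (m := 2 * α) (n := 2 * γ) (by simp) hu ht (by linear_combination h)

theorem isSquare_add_mul_of_eq {a b c u w t : ℤ} {α β γ : ℕ} (hu : (u : ZMod p) ≠ 0)
    (ht : (t : ZMod p) ≠ 0) (huw : (u : ZMod p) = w) (hαβ : α = β)
    (h : a * (p ^ α * u) ^ 2 + b * (p ^ β * w) ^ 2 = c * (p ^ γ * t) ^ 2) :
    IsSquare (((a + b) * c : ℤ) : ZMod p) := by
  subst hαβ
  push_cast
  refine isSquare_mul_of_pow_mul_eq_pow_mul (S := a * u ^ 2 + b * w ^ 2)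
    (m := 2 * α) (n := 2 * γ) ?_ hu ht (by linear_combination h)
  push_cast
  rw [← huw]
  ring

theorem isSquare_or_of_ordCompl_modEq {a b c : ℤ} {x y z : ℕ} (hx : x ≠ 0) (hy : y ≠ 0)
    (hz : z ≠ 0) (hxy : ordCompl[p] x ≡ ordCompl[p] y [MOD p])
    (h : a * x ^ 2 + b * y ^ 2 = c * z ^ 2) :
    IsSquare ((a * c : ℤ) : ZMod p) ∨ IsSquare ((b * c : ℤ) : ZMod p) ∨
      IsSquare (((a + b) * c : ℤ) : ZMod p) := by
  have hdec (n : ℕ) : (n : ℤ) = (p : ℤ) ^ n.factorization p * (ordCompl[p] n : ℕ) := by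
    exact_mod_cast (Nat.ordProj_mul_ordCompl_eq_self n p).symm
  have hunit {n : ℕ} (hn : n ≠ 0) : (((ordCompl[p] n : ℕ) : ℤ) : ZMod p) ≠ 0 := by
    rw [Int.cast_natCast, Ne, natCast_eq_zero_iff]
    exact Nat.not_dvd_ordCompl Fact.out hn
  have hxy' : (((ordCompl[p] x : ℕ) : ℤ) : ZMod p) = ((ordCompl[p] y : ℕ) : ℤ) := by
    rw [Int.cast_natCast, Int.cast_natCast]
    exact (natCast_eq_natCast_iff _ _ p).mpr hxy
  rw [hdec x, hdec y, hdec z] at h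
  rcases lt_trichotomy (x.factorization p) (y.factorization p) with hlt | heq | hgt
  · exact .inl (isSquare_mul_of_lt (hunit hx) (hunit hz) hlt h)
  · exact .inr (.inr (isSquare_add_mul_of_eq (hunit hx) (hunit hz) hxy' heq h))
  · rw [add_comm] at h
    exact .inr (.inl (isSquare_mul_of_lt (hunit hy) (hunit hz) hgt h))

end ZMod

namespace jacobiSym

theorem eq_one_of_modEq_one {a : ℤ} {n : ℕ} (hn : Odd n) (h : n ≡ 1 [MOD 4 * a.natAbs]) :
    J(a | n) = 1 := by
  rw [mod_right a hn, h, ← mod_right a odd_one, one_right]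

theorem prod_right {ι : Type*} (a : ℤ) {s : Finset ι} {n : ι → ℕ}
    (hn : ∀ i ∈ s, n i ≠ 0) : J(a | ∏ i ∈ s, n i) = ∏ i ∈ s, J(a | n i) := by
  classical
  induction s using Finset.induction_on with
  | empty => simp
  | insert j s hj ih =>
    rw [Finset.forall_mem_insert] at hn
    rw [Finset.prod_insert hj, Finset.prod_insert hj,
      mul_right' a hn.1 (Finset.prod_ne_zero_iff.mpr hn.2), ih hn.2]

theorem exists_eq_neg_one_of_prime_mul {q : ℕ} (hq : q.Prime) (hq2 : q ≠ 2) {a : ℤ}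
    (hqa : ¬(q : ℤ) ∣ a) {M : ℕ} (hM : M ≠ 0) :
    ∃ n, Odd n ∧ n.Coprime M ∧ J(q * a | n) = -1 := by
  have := Fact.mk hq
  obtain ⟨i, M', hqM', rfl⟩ := Nat.exists_eq_pow_mul_and_not_dvd hM q hq.one_lt.ne'
  obtain ⟨u, hu⟩ := FiniteField.exists_nonsquare (F := ZMod q) (by rwa [ZMod.ringChar_zmod_n])
  have hq4 : ¬q ∣ 4 := fun h => hq2 ((Nat.prime_dvd_prime_iff_eq hq Nat.prime_two).mp
    (hq.dvd_of_dvd_pow (n := 2) h))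
  have hK : (4 * a.natAbs * M').Coprime q := by
    refine Nat.Coprime.mul_left (Nat.Coprime.mul_left ?_ ?_) ?_ <;>
      refine Nat.coprime_comm.mp (hq.coprime_iff_not_dvd.mpr ?_)
    exacts [hq4, fun h => hqa (Int.natCast_dvd.mpr h), hqM']
  -- `n ≡ 1` modulo `4 |a| M'` makes `J(a | n) = 1` and reciprocity sign-free,
  -- while `n ≡ u` modulo `q` makes `J(q | n) = J(n | q) = -1`.
  obtain ⟨n, hn1, hnu⟩ := Nat.chineseRemainder hK 1 u.val
  have hn4 : n % 4 = 1 := hn1.of_dvd (dvd_mul_of_dvd_left (dvd_mul_right 4 _) _)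
  have hodd : Odd n := Nat.odd_iff.mpr (by omega)
  have hnq : (n : ZMod q) = u := by
    rw [(ZMod.natCast_eq_natCast_iff _ _ q).mpr hnu, ZMod.natCast_zmod_val]
  refine ⟨n, hodd, Nat.Coprime.mul_right (Nat.Coprime.pow_right i ?_) ?_, ?_⟩
  · refine Nat.coprime_comm.mp (hq.coprime_iff_not_dvd.mpr fun h => hu ?_)
    rw [← hnq, (ZMod.natCast_eq_zero_iff n q).mpr h]
    exact IsSquare.zero
  · rw [Nat.Coprime, (hn1.of_dvd (dvd_mul_left M' _)).gcd_eq, Nat.gcd_one_left]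
  · rw [mul_left, eq_one_of_modEq_one hodd (hn1.of_dvd (dvd_mul_of_dvd_left dvd_rfl _)),
      mul_one, quadratic_reciprocity_one_mod_four' (hq.odd_of_ne_two hq2) hn4,
      ← legendreSym.to_jacobiSym, legendreSym.eq_neg_one_iff', hnq]
    exact hu

theorem exists_eq_neg_one_of_squarefree {a : ℤ} (ha : Squarefree a) (ha1 : a ≠ 1) {M : ℕ}
    (hM : M ≠ 0) : ∃ n, Odd n ∧ n.Coprime M ∧ J(a | n) = -1 := by
  by_cases h1 : a.natAbs = 1
  · obtain rfl : a = -1 := by omega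
    obtain ⟨n, hn3, hnM⟩ := Nat.exists_modEq_eight_coprime hM (by decide : Odd 3)
    have hn : n % 8 = 3 := hn3
    refine ⟨n, Nat.odd_iff.mpr (by omega), hnM, ?_⟩
    rw [at_neg_one (Nat.odd_iff.mpr (by omega)), ZMod.χ₄_nat_three_mod_four (by omega)]
  by_cases h2 : a.natAbs = 2
  · obtain ⟨n, hn5, hnM⟩ := Nat.exists_modEq_eight_coprime hM (by decide : Odd 5)
    have hn : n % 8 = 5 := hn5
    have hodd : Odd n := Nat.odd_iff.mpr (by omega)
    have hJ2 : J(2 | n) = -1 := by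
      rw [at_two hodd, ZMod.χ₈_nat_mod_eight, hn]
      rfl
    refine ⟨n, hodd, hnM, ?_⟩
    obtain rfl | rfl : a = 2 ∨ a = -2 := by omega
    · exact hJ2
    · rw [jacobiSym.neg _ hodd, ZMod.χ₄_nat_one_mod_four (by omega), hJ2, one_mul]
  obtain ⟨q, hq, hq2, hqa⟩ := Nat.exists_prime_ne_two_dvd_of_squarefree
    (Int.squarefree_natAbs.mpr ha) h1 h2
  obtain ⟨b, rfl⟩ := Int.natCast_dvd.mpr hqa
  have hqb : ¬(q : ℤ) ∣ b := fun ⟨c, hc⟩ =>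
    hq.not_isUnit (Int.ofNat_isUnit.mp (ha (q : ℤ) ⟨c, by rw [hc]; ring⟩))
  exact exists_eq_neg_one_of_prime_mul hq hq2 hqb hM

theorem exists_eq_neg_one {d : ℤ} (hd : ¬IsSquare d) {M : ℕ} (hM : M ≠ 0) :
    ∃ n, Odd n ∧ n.Coprime M ∧ J(d | n) = -1 := by
  have hd0 : d ≠ 0 := by rintro rfl; exact hd IsSquare.zero
  obtain ⟨A, B, -, hB, hBA, hA⟩ := Nat.sq_mul_squarefree_of_pos (Int.natAbs_pos.mpr hd0)
  obtain ⟨a, rfl⟩ : (B : ℤ) ^ 2 ∣ d := Int.natAbs_dvd_natAbs.mp <| by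
    rw [← hBA, Int.natAbs_pow, Int.natAbs_natCast]
    exact dvd_mul_right _ _
  have haA : a.natAbs = A := by
    rw [Int.natAbs_mul, Int.natAbs_pow, Int.natAbs_natCast] at hBA
    exact (Nat.eq_of_mul_eq_mul_left (by positivity) hBA).symm
  have ha1 : a ≠ 1 := by rintro rfl; exact hd ⟨B, by ring⟩
  obtain ⟨n, hn, hnM, hJ⟩ := exists_eq_neg_one_of_squarefree
    (Int.squarefree_natAbs.mp (haA ▸ hA)) ha1 (mul_ne_zero hM hB.ne')
  have hBn : (B : ℤ).gcd n = 1 := by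
    rw [Int.gcd_natCast_natCast]
    exact (Nat.Coprime.coprime_mul_left_right hnM).symm
  refine ⟨n, hn, Nat.Coprime.coprime_mul_right_right hnM, ?_⟩
  rw [mul_left, sq_one' hBn, one_mul, hJ]

theorem exists_forall_eq_neg_one {d : Fin 3 → ℤ} (hd : ∀ i, ¬IsSquare (d i))
    (hprod : ¬IsSquare (∏ i, d i)) :
    ∃ N, Odd N ∧ N.Coprime (∏ i, d i).natAbs ∧ ∀ i, J(d i | N) = -1 := by
  have hdE (i : Fin 3) : (d i).natAbs ∣ (∏ i, d i).natAbs :=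
    Int.natAbs_dvd_natAbs.mpr (Finset.dvd_prod_of_mem d (Finset.mem_univ i))
  set E := ∏ i, d i with hEdef
  have hE : E.natAbs ≠ 0 := Int.natAbs_ne_zero.mpr fun h => hprod (h ▸ IsSquare.zero)
  obtain ⟨n₀, hn₀⟩ := exists_eq_neg_one hprod hE
  choose m hm using fun i => exists_eq_neg_one (hd i) hE
  set n : Fin 4 → ℕ := Fin.cons n₀ m
  have hn : ∀ j, Odd (n j) ∧ (n j).Coprime E.natAbs :=
    Fin.cases ⟨hn₀.1, hn₀.2.1⟩ fun i => ⟨(hm i).1, (hm i).2.1⟩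
  -- The sign vectors `(J(d i | n))ᵢ` are multiplicative in `n`, so some subproduct of the
  -- `n j` has all signs `-1`.
  have hσ (j : Fin 4) (i : Fin 3) : ∃ u : ℤˣ, (u : ℤ) = J(d i | n j) := by
    have hgcd : (d i).gcd (n j) = 1 := by
      rw [Int.gcd_eq_natAbs, Int.natAbs_natCast]
      exact ((hn j).2.coprime_dvd_right (hdE i)).symm
    rcases eq_one_or_neg_one hgcd with h | h
    exacts [⟨1, h.symm⟩, ⟨-1, h.symm⟩]
  choose σ hσ using hσ
  have hσ₀ : ∏ i, σ 0 i = -1 := by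
    refine Units.ext ?_
    simp only [Units.coe_prod, hσ, Units.val_neg, Units.val_one]
    rw [← hn₀.2.2, hEdef, Fin.prod_univ_three, Fin.prod_univ_three, mul_left, mul_left]
    rfl
  have hσ₁ (i : Fin 3) : σ i.succ i = -1 := Units.ext ((hσ _ _).trans (hm i).2.2)
  obtain ⟨s, hs⟩ := Int.units_exists_prod_eq_neg_one σ hσ₀ hσ₁
  refine ⟨∏ j ∈ s, n j, ?_, Nat.Coprime.prod_left fun j _ => (hn j).2, fun i => ?_⟩
  · exact Nat.coprime_two_right.mp
      (Nat.Coprime.prod_left fun j _ => Nat.coprime_two_right.mpr (hn j).1)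
  · rw [prod_right _ fun j _ => (hn j).1.pos.ne', ← Finset.prod_congr rfl fun j _ => hσ j i,
      ← Units.coe_prod, ← Finset.prod_apply, hs]
    rfl

theorem exists_prime_eq_of_coprime {E : ℤ} (hE : E ≠ 0) {N : ℕ} (hN : Odd N)
    (hNE : N.Coprime E.natAbs) : ∃ p, p.Prime ∧ ∀ d, d ∣ E → J(d | p) = J(d | N) := by
  have : NeZero (4 * E.natAbs) := ⟨by positivity⟩
  have hunit : IsUnit (N : ZMod (4 * E.natAbs)) :=
    (ZMod.isUnit_iff_coprime _ _).mpr
      (Nat.Coprime.mul_right ((Nat.coprime_two_right.mpr hN).pow_right 2) hNE)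
  obtain ⟨p, hp2, hp, hpN⟩ := Nat.forall_exists_prime_gt_and_eq_mod hunit 2
  refine ⟨p, hp, fun d hd => ?_⟩
  have hmod : p ≡ N [MOD 4 * d.natAbs] :=
    ((ZMod.natCast_eq_natCast_iff _ _ _).mp hpN).of_dvd
      (Nat.mul_dvd_mul_left 4 (Int.natAbs_dvd_natAbs.mpr hd))
  rw [mod_right d (hp.odd_of_ne_two hp2.ne'), hmod, ← mod_right d hN]

end jacobiSym

theorem exists_prime_forall_not_isSquare {d : Fin 3 → ℤ} (hd : ∀ i, ¬IsSquare (d i))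
    (hprod : ¬IsSquare (∏ i, d i)) : ∃ p, p.Prime ∧ ∀ i, ¬IsSquare (d i : ZMod p) := by
  have hE : ∏ i, d i ≠ 0 := fun h => hprod (h ▸ IsSquare.zero)
  obtain ⟨N, hN, hNE, hJ⟩ := jacobiSym.exists_forall_eq_neg_one hd hprod
  obtain ⟨p, hp, hpN⟩ := jacobiSym.exists_prime_eq_of_coprime hE hN hNE
  exact ⟨p, hp, fun i => ZMod.nonsquare_of_jacobiSym_eq_neg_one
    ((hpN _ (Finset.dvd_prod_of_mem d (Finset.mem_univ i))).trans (hJ i))⟩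

theorem stmt16 (a b c : ℤ)
    (hPR : ∀ (r : ℕ) (col : ℕ → Fin r),
      ∃ x y z : ℕ, 0 < x ∧ 0 < y ∧ 0 < z ∧ x ≠ y ∧ col x = col y ∧
        a * (x : ℤ) ^ 2 + b * (y : ℤ) ^ 2 = c * (z : ℤ) ^ 2) :
    (∃ k : ℤ, a * c = k ^ 2) ∨ (∃ k : ℤ, b * c = k ^ 2) ∨
      (∃ k : ℤ, (a + b) * c = k ^ 2) ∨ (∃ k : ℤ, a * b * (a + b) * c = k ^ 2) := by
  simp only [← isSquare_iff_exists_sq]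
  by_contra! h
  obtain ⟨hac, hbc, habc, hab⟩ := h
  have hc : c ≠ 0 := by rintro rfl; exact hac (by simp)
  set d : Fin 3 → ℤ := ![a * c, b * c, (a + b) * c]
  have hd : ∀ i, ¬IsSquare (d i) := by simp [d, Fin.forall_fin_succ, hac, hbc, habc]
  have hprod : ¬IsSquare (∏ i, d i) := by
    rw [Fin.prod_univ_three, show d 0 * d 1 * d 2 = c ^ 2 * (a * b * (a + b) * c) by
      change a * c * (b * c) * ((a + b) * c) = _; ring]
    exact fun h => hab (Int.isSquare_of_isSquare_sq_mul_s16 hc h)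
  obtain ⟨p, hp, hdp⟩ := exists_prime_forall_not_isSquare hd hprod
  have := Fact.mk hp
  obtain ⟨x, y, z, hx, hy, hz, -, hxy, h⟩ :=
    hPR p fun n => ⟨ordCompl[p] n % p, Nat.mod_lt _ hp.pos⟩
  rcases ZMod.isSquare_or_of_ordCompl_modEq hx.ne' hy.ne' hz.ne' (congrArg Fin.val hxy) h with
    h | h | h
  exacts [hdp 0 h, hdp 1 h, hdp 2 h]
end

section
/- Let a, b, c ∈ ℤ with a ≡ 2 (mod 4), b odd, and ab(a+b)c a perfect square. Then the equation a x^2 + b y^2 = c z^2 is not partition regular with respect to (x, y). -/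
/-!
Colour `n` by the parity of its 2-adic valuation. Write `a = 2a'`. If `x, y` have the same
colour, then `v₂(a x²)` is odd and `v₂(b y²)` is even, so `v₂(a x² + b y²)` is even unless
`v₂(x) < v₂(y)`; in that case `v₂(y) ≥ v₂(x) + 2`, and the odd part of `a x² + b y²` is
`≡ a'` mod 8. On the other side, `ab(a+b)c` being a square forces `v₂(c)` odd, so `v₂(c z²)` is
odd, and the odd part `c'` of `c` satisfies `a' b (2a' + b) c' ≡ 1` mod 8. Together with
`c' ≡ a'` this gives `2a'b + 1 ≡ 1` mod 8, impossible for odd `a', b`.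
-/

lemma Nat.eq_two_pow_factorization_mul_odd {n : ℕ} (hn : n ≠ 0) :
    ∃ m : ℕ, Odd m ∧ n = 2 ^ n.factorization 2 * m := by
  refine ⟨n / 2 ^ n.factorization 2, ?_, (Nat.ordProj_mul_ordCompl_eq_self n 2).symm⟩
  have := Nat.not_dvd_ordCompl Nat.prime_two hn
  rw [Nat.odd_iff]
  omega

namespace Int

lemma exists_eq_two_pow_mul_odd {n : ℤ} (hn : n ≠ 0) :
    ∃ (k : ℕ) (m : ℤ), Odd m ∧ n = 2 ^ k * m := by
  have hfin : FiniteMultiplicity (2 : ℤ) n := Int.finiteMultiplicity_iff.mpr ⟨by decide, hn⟩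
  obtain ⟨m, hnm, hm⟩ := hfin.exists_eq_pow_mul_and_not_dvd
  exact ⟨_, m, Int.not_even_iff_odd.mp (mt Even.two_dvd hm), hnm⟩

lemma two_pow_mul_odd_inj {i j : ℕ} {p q : ℤ} (hp : Odd p) (hq : Odd q) :
    2 ^ i * p = 2 ^ j * q ↔ i = j ∧ p = q := by
  refine ⟨fun h => ?_, by rintro ⟨rfl, rfl⟩; rfl⟩
  wlog hij : i ≤ j generalizing i j p q
  · exact (this hq hp h.symm (by omega)).imp Eq.symm Eq.symm
  obtain ⟨d, rfl⟩ := Nat.exists_eq_add_of_le hij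
  have hpq : p = 2 ^ d * q := by
    rw [pow_add, mul_assoc] at h
    exact mul_left_cancel₀ (by positivity) h
  cases d with
  | zero => simpa using hpq
  | succ d =>
    refine absurd hp (Int.not_odd_iff_even.mpr ⟨2 ^ d * q, ?_⟩)
    rw [hpq]; ring

lemma cast_zmod_eight_sq_of_odd {n : ℤ} (hn : Odd n) : (n : ZMod 8) ^ 2 = 1 := by
  obtain ⟨k, rfl⟩ := hn
  push_cast
  generalize (k : ZMod 8) = x
  revert x
  decide

lemma two_pow_mul_ne_zero_of_odd (k : ℕ) {n : ℤ} (hn : Odd n) : 2 ^ k * n ≠ 0 :=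
  mul_ne_zero (by positivity) (by rintro rfl; exact Int.not_odd_zero hn)

lemma even_and_cast_zmod_eight_eq_one_of_two_pow_mul_odd_eq_sq {v : ℕ} {n k : ℤ} (hn : Odd n)
    (h : 2 ^ v * n = k ^ 2) : Even v ∧ (n : ZMod 8) = 1 := by
  have hk : k ≠ 0 := by
    rintro rfl
    exact two_pow_mul_ne_zero_of_odd v hn (by simpa using h)
  obtain ⟨g, m, hm, rfl⟩ := exists_eq_two_pow_mul_odd hk
  rw [mul_pow, ← pow_mul, two_pow_mul_odd_inj hn hm.pow] at h
  obtain ⟨rfl, rfl⟩ := h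
  exact ⟨⟨g, by ring⟩, by push_cast; exact cast_zmod_eight_sq_of_odd hm⟩

end Int

lemma exists_two_pow_mul_odd_eq_two_pow_odd_mul_add_two_pow_even_mul {s t : ℕ}
    (hst : s % 2 = t % 2) {p q : ℤ} (hp : Odd p) (hq : Odd q) :
    ∃ (j : ℕ) (n : ℤ), Odd n ∧ 2 ^ (2 * s + 1) * p + 2 ^ (2 * t) * q = 2 ^ j * n ∧
      (Even j ∨ (n : ZMod 8) = p) := by
  rcases le_or_gt t s with hts | hst'
  · obtain ⟨d, rfl⟩ := Nat.exists_eq_add_of_le hts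
    refine ⟨2 * t, 2 ^ (2 * d + 1) * p + q, ?_, by ring, Or.inl ⟨t, by ring⟩⟩
    exact Even.add_odd ⟨2 ^ (2 * d) * p, by ring⟩ hq
  · obtain ⟨d, rfl⟩ : ∃ d, t = s + 2 * d + 2 := ⟨(t - s - 2) / 2, by omega⟩
    refine ⟨2 * s + 1, p + 8 * 2 ^ (4 * d) * q, ?_, by ring, Or.inr ?_⟩
    · exact hp.add_even ⟨4 * 2 ^ (4 * d) * q, by ring⟩
    · push_cast
      rw [show (8 : ZMod 8) = 0 from rfl]
      ring

lemma exists_two_pow_mul_odd_eq_two_mul_mul_sq_add_mul_sq {a' b : ℤ} (ha' : Odd a') (hb : Odd b)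
    {x y : ℕ} (hx : x ≠ 0) (hy : y ≠ 0) (hxy : x.factorization 2 % 2 = y.factorization 2 % 2) :
    ∃ (j : ℕ) (n : ℤ), Odd n ∧ 2 * a' * (x : ℤ) ^ 2 + b * (y : ℤ) ^ 2 = 2 ^ j * n ∧
      (Even j ∨ (n : ZMod 8) = a') := by
  obtain ⟨u, hu, hxu⟩ := Nat.eq_two_pow_factorization_mul_odd hx
  obtain ⟨w, hw, hyw⟩ := Nat.eq_two_pow_factorization_mul_odd hy
  replace hu : Odd (u : ℤ) := (Int.odd_coe_nat u).mpr hu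
  replace hw : Odd (w : ℤ) := (Int.odd_coe_nat w).mpr hw
  obtain ⟨j, n, hn, hsum, hjn⟩ := exists_two_pow_mul_odd_eq_two_pow_odd_mul_add_two_pow_even_mul
    hxy (p := a' * (u : ℤ) ^ 2) (q := b * (w : ℤ) ^ 2) (ha'.mul hu.pow) (hb.mul hw.pow)
  refine ⟨j, n, hn, ?_, ?_⟩
  · rw [← hsum, show (x : ℤ) = 2 ^ x.factorization 2 * u by exact_mod_cast hxu,
      show (y : ℤ) = 2 ^ y.factorization 2 * w by exact_mod_cast hyw]
    ring
  · rwa [Int.cast_mul, Int.cast_pow, Int.cast_zmod_eight_sq_of_odd hu, mul_one] at hjn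

lemma exists_two_pow_mul_odd_eq_two_pow_mul_mul_sq {c' : ℤ} (hc' : Odd c') (v : ℕ) {z : ℤ}
    (hz : z ≠ 0) :
    ∃ (e : ℕ) (n : ℤ), Odd n ∧ 2 ^ v * c' * z ^ 2 = 2 ^ (v + 2 * e) * n ∧ (n : ZMod 8) = c' := by
  obtain ⟨e, m, hm, rfl⟩ := Int.exists_eq_two_pow_mul_odd hz
  refine ⟨e, c' * m ^ 2, hc'.mul hm.pow, by ring, ?_⟩
  rw [Int.cast_mul, Int.cast_pow, Int.cast_zmod_eight_sq_of_odd hm, mul_one]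

lemma zmod_eight_sq_mul_mul_two_mul_add_ne_one {p q : ZMod 8} (hp : p ^ 2 = 1) (hq : q ^ 2 = 1) :
    p * q * (2 * p + q) * p ≠ 1 := by
  revert p q
  decide

lemma odd_and_cast_zmod_eight_ne_of_two_mul_mul_mul_eq_sq {a' b c' k : ℤ} {v : ℕ} (ha' : Odd a')
    (hb : Odd b) (hc' : Odd c') (h : 2 * a' * b * (2 * a' + b) * (2 ^ v * c') = k ^ 2) :
    Odd v ∧ (c' : ZMod 8) ≠ a' := by
  obtain ⟨hv, h8⟩ := Int.even_and_cast_zmod_eight_eq_one_of_two_pow_mul_odd_eq_sq (v := v + 1)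
    (n := a' * b * (2 * a' + b) * c') (((ha'.mul hb).mul ((even_two_mul a').add_odd hb)).mul hc')
    (by rw [← h]; ring)
  refine ⟨by simpa [Nat.even_add_one] using hv, fun hca => ?_⟩
  push_cast at h8
  rw [hca] at h8
  exact zmod_eight_sq_mul_mul_two_mul_add_ne_one (Int.cast_zmod_eight_sq_of_odd ha')
    (Int.cast_zmod_eight_sq_of_odd hb) h8

theorem stmt17 (a b c : ℤ) (ha : a % 4 = 2) (hb : Odd b)
    (hsq : ∃ k : ℤ, a * b * (a + b) * c = k ^ 2) :
    ∃ (r : ℕ) (col : ℕ → Fin r),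
      ¬ ∃ x y z : ℕ, 0 < x ∧ 0 < y ∧ 0 < z ∧ x ≠ y ∧ col x = col y ∧
        a * (x : ℤ) ^ 2 + b * (y : ℤ) ^ 2 = c * (z : ℤ) ^ 2 := by
  refine ⟨2, fun n => ⟨n.factorization 2 % 2, Nat.mod_lt _ two_pos⟩, ?_⟩
  rintro ⟨x, y, z, hx, hy, hz, -, hcol, heq⟩
  obtain ⟨a', rfl⟩ : ∃ a', a = 2 * a' := ⟨a / 2, by omega⟩
  have ha' : Odd a' := by rw [Int.odd_iff]; omega
  obtain ⟨j, n, hn, hlhs, hjn⟩ := exists_two_pow_mul_odd_eq_two_mul_mul_sq_add_mul_sq ha' hb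
    hx.ne' hy.ne' (Fin.val_eq_of_eq hcol)
  have hc : c ≠ 0 := by
    rintro rfl
    exact Int.two_pow_mul_ne_zero_of_odd j hn (by rw [← hlhs, heq, zero_mul])
  obtain ⟨v, c', hc', rfl⟩ := Int.exists_eq_two_pow_mul_odd hc
  obtain ⟨k, hk⟩ := hsq
  obtain ⟨hv, hca⟩ := odd_and_cast_zmod_eight_ne_of_two_mul_mul_mul_eq_sq ha' hb hc' hk
  obtain ⟨e, n', hn', hrhs, hn'c⟩ :=
    exists_two_pow_mul_odd_eq_two_pow_mul_mul_sq hc' v (Int.natCast_pos.mpr hz).ne'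
  rw [heq, hrhs, Int.two_pow_mul_odd_inj hn' hn] at hlhs
  obtain ⟨rfl, rfl⟩ := hlhs
  rcases hjn with hj | hj
  · exact Nat.not_even_iff_odd.mpr (hv.add_even (even_two_mul e)) hj
  · exact hca (hn'c.symm.trans hj)
end

section
/- Let a, b, c ∈ ℤ with a and b odd, c ≡ 2 (mod 4), and ab(a+b)c a nonzero perfect square. If the equation a x^2 + b y^2 = c z^2 is partition regular with respect to (x, y), then ab ≡ 1 (mod 8). -/
/-!
Write `c = 2c'` and `a + b = 2^s m` with `c'`, `m` odd, and colour each positive integer by its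
odd part modulo `2^(s+3)`. For a monochromatic solution `x = 2^α u`, `y = 2^β v`, `z = 2^γ w`,
the right-hand side has odd 2-adic valuation, which forces `α = β`. Then
`a u² + b v² ≡ (a + b) u² (mod 2^(s+4))`, and comparing odd parts gives `m ≡ c' (mod 8)`.
Finally `ab(a+b)c = 2^(s+1) · abmc'` is a square, so `abmc' ≡ 1 (mod 8)`, whence
`ab ≡ ab c'² ≡ abmc' ≡ 1 (mod 8)`.
-/

lemma eq_and_eq_of_pow_mul_eq_pow_mul {R : Type*} [CommMonoidWithZero R] [IsCancelMulZero R]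
    {p u v : R} (hp : Prime p) (hu : ¬p ∣ u) (hv : ¬p ∣ v) {i j : ℕ}
    (h : p ^ i * u = p ^ j * v) : i = j ∧ u = v := by
  have hmult := congrArg (emultiplicity p) h
  simp only [emultiplicity_mul hp, emultiplicity_pow_self_of_prime hp,
    emultiplicity_eq_zero.mpr hu, emultiplicity_eq_zero.mpr hv, add_zero, Nat.cast_inj] at hmult
  subst hmult
  exact ⟨rfl, mul_left_cancel₀ (pow_ne_zero _ hp.ne_zero) h⟩

namespace Int

lemma two_pow_mul_odd_inj_s18 {u v : ℤ} (hu : Odd u) (hv : Odd v) {i j : ℕ}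
    (h : 2 ^ i * u = 2 ^ j * v) : i = j ∧ u = v :=
  eq_and_eq_of_pow_mul_eq_pow_mul Int.prime_two
    (Int.not_even_iff_odd.mpr hu ∘ even_iff_two_dvd.mpr)
    (Int.not_even_iff_odd.mpr hv ∘ even_iff_two_dvd.mpr) h

lemma sq_modEq_one_of_odd {x : ℤ} (hx : Odd x) : x ^ 2 ≡ 1 [ZMOD 8] := by
  obtain ⟨k, rfl⟩ := hx
  obtain ⟨m, hm⟩ := Int.even_mul_succ_self k
  exact Int.modEq_iff_dvd.mpr ⟨-m, by linear_combination -4 * hm⟩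

lemma sq_modEq_sq_of_modEq_of_odd {u v n : ℤ} (h : u ≡ v [ZMOD n]) (hu : Odd u) (hv : Odd v) :
    u ^ 2 ≡ v ^ 2 [ZMOD 2 * n] := by
  have hdiff : v ^ 2 - u ^ 2 = (v + u) * (v - u) := by ring
  rw [Int.modEq_iff_dvd, hdiff]
  exact mul_dvd_mul (hv.add_odd hu).two_dvd h.dvd

lemma odd_modEq_one_of_two_pow_mul_eq_sq {n k : ℤ} {s : ℕ} (hn : Odd n)
    (h : 2 ^ s * n = k ^ 2) : n ≡ 1 [ZMOD 8] := by
  have hk : k ≠ 0 := by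
    rintro rfl
    have hn0 : n = 0 := by simpa using h
    exact Int.not_even_iff_odd.mpr hn (hn0 ▸ Even.zero)
  obtain ⟨κ, k', hk', rfl⟩ := exists_eq_two_pow_mul_odd hk
  have hk2 : 2 ^ s * n = 2 ^ (2 * κ) * k' ^ 2 := by rw [h]; ring
  obtain ⟨-, rfl⟩ := two_pow_mul_odd_inj_s18 hn hk'.pow hk2
  exact sq_modEq_one_of_odd hk'

end Int

section TwoAdic

variable {a b c u v w : ℤ} {α β γ : ℕ}

-- Otherwise the left side has even 2-adic valuation and the right side odd.
lemma two_pow_eq_of_mul_sq_add_mul_sq_eq_two_mul_sq (ha : Odd a) (hb : Odd b) (hc : Odd c)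
    (hu : Odd u) (hv : Odd v) (hw : Odd w)
    (h : a * (2 ^ α * u) ^ 2 + b * (2 ^ β * v) ^ 2 = 2 * c * (2 ^ γ * w) ^ 2) : α = β := by
  by_contra hne
  wlog hlt : α < β generalizing a b u v α β
  · exact this hb ha hv hu (by linear_combination h) (Ne.symm hne) (by omega)
  obtain ⟨d, rfl⟩ := Nat.exists_eq_add_of_lt hlt
  have hodd : Odd (a * u ^ 2 + 2 ^ (2 * d + 2) * (b * v ^ 2)) :=
    (ha.mul hu.pow).add_even ((even_two.pow_of_ne_zero (by omega)).mul_right _)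
  have hsplit : 2 ^ (2 * α) * (a * u ^ 2 + 2 ^ (2 * d + 2) * (b * v ^ 2)) =
      2 ^ (2 * γ + 1) * (c * w ^ 2) := by
    linear_combination h
  have := (Int.two_pow_mul_odd_inj_s18 hodd (hc.mul hw.pow) hsplit).1
  omega

lemma modEq_eight_of_mul_sq_add_mul_sq_eq_two_mul_sq {m : ℤ} {s : ℕ} (ha : Odd a) (hb : Odd b)
    (hc : Odd c) (hm : Odd m) (hu : Odd u) (hv : Odd v) (hw : Odd w) (hab : a + b = 2 ^ s * m)
    (huv : u ≡ v [ZMOD 2 ^ (s + 3)])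
    (h : a * (2 ^ α * u) ^ 2 + b * (2 ^ β * v) ^ 2 = 2 * c * (2 ^ γ * w) ^ 2) :
    m ≡ c [ZMOD 8] := by
  obtain rfl := two_pow_eq_of_mul_sq_add_mul_sq_eq_two_mul_sq ha hb hc hu hv hw h
  have hsq : u ^ 2 ≡ v ^ 2 [ZMOD 2 ^ (s + 4)] := by
    simpa only [pow_succ, mul_comm] using Int.sq_modEq_sq_of_modEq_of_odd huv hu hv
  obtain ⟨R, hR⟩ := hsq.dvd
  -- `a u² + b v² = (a + b) u² + b (v² - u²) = 2^s (m u² + 16 b R)`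
  have hodd : Odd (m * u ^ 2 + 8 * (2 * b * R)) :=
    (hm.mul hu.pow).add_even ⟨8 * b * R, by ring⟩
  have hsplit :
      2 ^ (2 * α + s) * (m * u ^ 2 + 8 * (2 * b * R)) = 2 ^ (2 * γ + 1) * (c * w ^ 2) := by
    linear_combination h - 2 ^ (2 * α) * u ^ 2 * hab - 2 ^ (2 * α) * b * hR
  have hodd_parts := (Int.two_pow_mul_odd_inj_s18 hodd (hc.mul hw.pow) hsplit).2
  calc m = m * 1 := (mul_one m).symm
    _ ≡ m * u ^ 2 [ZMOD 8] := (Int.sq_modEq_one_of_odd hu).symm.mul_left m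
    _ ≡ m * u ^ 2 + 8 * (2 * b * R) [ZMOD 8] := Int.modEq_add_fac_self.symm
    _ = c * w ^ 2 := hodd_parts
    _ ≡ c * 1 [ZMOD 8] := (Int.sq_modEq_one_of_odd hw).mul_left c
    _ = c := mul_one c

end TwoAdic

def oddPartMod (k n : ℕ) : Fin (2 ^ k) :=
  ⟨ordCompl[2] n % 2 ^ k, Nat.mod_lt _ (by positivity)⟩

lemma Nat.cast_eq_two_pow_mul_ordCompl (n : ℕ) :
    (n : ℤ) = 2 ^ n.factorization 2 * (ordCompl[2] n : ℕ) := by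
  exact_mod_cast (Nat.ordProj_mul_ordCompl_eq_self n 2).symm

lemma Int.odd_natCast_ordCompl_two {n : ℕ} (hn : n ≠ 0) : Odd ((ordCompl[2] n : ℕ) : ℤ) :=
  Int.odd_coe_nat _ |>.mpr <| Nat.odd_iff.mpr <|
    Nat.two_dvd_ne_zero.mp (Nat.not_dvd_ordCompl Nat.prime_two hn)

lemma ordCompl_modEq_of_oddPartMod_eq {k x y : ℕ} (h : oddPartMod k x = oddPartMod k y) :
    ((ordCompl[2] x : ℕ) : ℤ) ≡ (ordCompl[2] y : ℕ) [ZMOD 2 ^ k] := by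
  exact_mod_cast Int.natCast_modEq_iff.mpr (congrArg Fin.val h)

theorem stmt18 (a b c : ℤ) (ha : Odd a) (hb : Odd b) (hc : c % 4 = 2)
    (hne : a * b * (a + b) * c ≠ 0) (hsq : ∃ k : ℤ, a * b * (a + b) * c = k ^ 2)
    (hPR : ∀ (r : ℕ) (col : ℕ → Fin r),
      ∃ x y z : ℕ, 0 < x ∧ 0 < y ∧ 0 < z ∧ x ≠ y ∧ col x = col y ∧
        a * (x : ℤ) ^ 2 + b * (y : ℤ) ^ 2 = c * (z : ℤ) ^ 2) :
    a * b % 8 = 1 := by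
  obtain ⟨c', hc', rfl⟩ : ∃ c', Odd c' ∧ c = 2 * c' :=
    ⟨c / 2, ⟨c / 4, by omega⟩, by omega⟩
  have hab0 : a + b ≠ 0 := fun h => hne (by rw [h]; ring)
  obtain ⟨s, m, hm, hab⟩ := Int.exists_eq_two_pow_mul_odd hab0
  obtain ⟨x, y, z, hx, hy, hz, -, hcol, heq⟩ := hPR _ (oddPartMod (s + 3))
  rw [Nat.cast_eq_two_pow_mul_ordCompl x, Nat.cast_eq_two_pow_mul_ordCompl y,
    Nat.cast_eq_two_pow_mul_ordCompl z] at heq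
  have hmc : m ≡ c' [ZMOD 8] :=
    modEq_eight_of_mul_sq_add_mul_sq_eq_two_mul_sq ha hb hc' hm
      (Int.odd_natCast_ordCompl_two hx.ne') (Int.odd_natCast_ordCompl_two hy.ne')
      (Int.odd_natCast_ordCompl_two hz.ne') hab
      (ordCompl_modEq_of_oddPartMod_eq hcol) heq
  obtain ⟨k, hk⟩ := hsq
  have habmc : a * b * m * c' ≡ 1 [ZMOD 8] :=
    Int.odd_modEq_one_of_two_pow_mul_eq_sq (s := s + 1) (((ha.mul hb).mul hm).mul hc')
      (by rw [← hk, hab]; ring)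
  calc a * b = a * b * 1 := (mul_one _).symm
    _ ≡ a * b * c' ^ 2 [ZMOD 8] := (Int.sq_modEq_one_of_odd hc').symm.mul_left _
    _ = a * b * c' * c' := by ring
    _ ≡ a * b * m * c' [ZMOD 8] := (hmc.symm.mul_left _).mul_right _
    _ ≡ 1 [ZMOD 8] := habmc
end

section
/- Let F₁ and F₂ be disjoint finite subsets of ℙ ∪ {−1}, where ℙ is the set of prime numbers. Then there exists an odd prime p, not dividing any element of F₁ ∪ F₂, such that every element of F₁ is a quadratic residue modulo p and every element of F₂ is a quadratic non-residue modulo p. -/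
/-!
Pick the prime `p` by Dirichlet's theorem in a residue class modulo `8 * ∏ q`, the product
over the odd primes `q` occurring. The class of `p` modulo `8` fixes `(-1 / p) = χ₄ p` and
`(2 / p) = χ₈ p`; for an odd prime `q`, quadratic reciprocity gives
`(q / p) = qrSign p q * (p / q)`, where the sign depends only on `p` modulo `4` and `(p / q)`
only on `p` modulo `q`. Prescribing these residues independently is possible by the Chinese
remainder theorem.
-/

open Function ZMod NumberTheorySymbols

theorem Nat.exists_prime_modEq_of_pairwise_coprime {ι : Type*} (t : Finset ι) (s a : ι → ℕ)
    (hs : ∀ i ∈ t, s i ≠ 0) (hst : Set.Pairwise t (Nat.Coprime on s))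
    (ha : ∀ i ∈ t, (a i).Coprime (s i)) :
    ∃ p, p.Prime ∧ ∀ i ∈ t, p ≡ a i [MOD s i] := by
  obtain ⟨k, hk⟩ := Nat.chineseRemainderOfFinset a s t hs hst
  have hk_coprime : k.Coprime (∏ i ∈ t, s i) :=
    Nat.Coprime.prod_right fun i hi => ((hk i hi).gcd_eq).trans (ha i hi)
  obtain ⟨p, -, hp, hpk⟩ :=
    Nat.forall_exists_prime_gt_and_modEq 0 (Finset.prod_ne_zero_iff.mpr hs) hk_coprime
  exact ⟨p, hp, fun i hi => ((hpk.of_dvd (Finset.dvd_prod_of_mem s hi))).trans (hk i hi)⟩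

theorem Nat.exists_prime_modEq_eight_and_modEq {Q : Finset ℕ} (hQ : ∀ q ∈ Q, q.Prime ∧ q ≠ 2)
    {r : ℕ} (hr : Odd r) (a : ℕ → ℕ) (ha : ∀ q ∈ Q, (a q).Coprime q) :
    ∃ p, p.Prime ∧ p ≡ r [MOD 8] ∧ ∀ q ∈ Q, p ≡ a q [MOD q] := by
  have h8Q : 8 ∉ Q := fun h => absurd (hQ 8 h).1 (by norm_num)
  have hcop8 : ∀ q ∈ Q, Nat.Coprime 8 q := fun q hq =>
    (Nat.coprime_pow_left_iff three_pos 2 q).mpr <|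
      Nat.coprime_two_left.mpr ((hQ q hq).1.odd_of_ne_two (hQ q hq).2)
  obtain ⟨p, hp, hpa⟩ := Nat.exists_prime_modEq_of_pairwise_coprime (insert 8 Q) id
    (fun n => if n = 8 then r else a n)
    (by
      simp only [Finset.mem_insert, id]
      rintro n (rfl | hn)
      · norm_num
      · exact (hQ n hn).1.ne_zero)
    (by
      rw [Finset.coe_insert, Set.pairwise_insert]
      refine ⟨fun q hq q' hq' hne => (Nat.coprime_primes (hQ q hq).1 (hQ q' hq').1).mpr hne,
        fun q hq _ => ⟨hcop8 q hq, (hcop8 q hq).symm⟩⟩)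
    (by
      simp only [Finset.mem_insert, id]
      rintro n (rfl | hn)
      · simpa using Nat.coprime_two_right.mpr hr |>.pow_right 3
      · simpa [ne_of_mem_of_not_mem hn h8Q] using ha n hn)
  refine ⟨p, hp, by simpa using hpa 8 (Finset.mem_insert_self 8 Q), fun q hq => ?_⟩
  simpa [ne_of_mem_of_not_mem hq h8Q] using hpa q (Finset.mem_insert_of_mem hq)

theorem exists_odd_χ₄_χ₈_eq {s₁ s₂ : ℤ} (h₁ : s₁ = 1 ∨ s₁ = -1) (h₂ : s₂ = 1 ∨ s₂ = -1) :
    ∃ r : ℕ, Odd r ∧ χ₄ r = s₁ ∧ χ₈ r = s₂ := by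
  rcases h₁ with rfl | rfl <;> rcases h₂ with rfl | rfl
  exacts [⟨1, by decide⟩, ⟨5, by decide⟩, ⟨7, by decide⟩, ⟨3, by decide⟩]

theorem Nat.Prime.exists_coprime_jacobiSym_eq {q : ℕ} (hq : q.Prime) (hq2 : q ≠ 2) {s : ℤ}
    (hs : s = 1 ∨ s = -1) : ∃ a : ℕ, a.Coprime q ∧ J(a | q) = s := by
  have := Fact.mk hq
  rcases hs with rfl | rfl
  · exact ⟨1, Nat.coprime_one_left q, by simp⟩
  · obtain ⟨b, hb⟩ := FiniteField.exists_nonsquare (F := ZMod q) (by rwa [ZMod.ringChar_zmod_n])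
    have hb0 : b ≠ 0 := fun h => hb (h ▸ IsSquare.zero)
    refine ⟨b.val, ?_, ?_⟩
    · rwa [Nat.coprime_comm, hq.coprime_iff_not_dvd, ← ZMod.natCast_eq_zero_iff,
        ZMod.natCast_zmod_val]
    · rw [ZMod.nonsquare_iff_jacobiSym_eq_neg_one]
      simpa using hb

theorem jacobiSym_eq_qrSign_mul_of_modEq {p q r a : ℕ} (hp : Odd p) (hq : Odd q)
    (hpr : p ≡ r [MOD 4]) (hpa : p ≡ a [MOD q]) : J(q | p) = qrSign r q * J(a | q) := by
  have hχ₄ : χ₄ p = χ₄ r := by rw [(ZMod.natCast_eq_natCast_iff p r 4).mpr hpr]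
  have hJ : J(p | q) = J(a | q) := jacobiSym.mod_left' (by exact_mod_cast hpa)
  rw [jacobiSym.quadratic_reciprocity' hq hp, qrSign, qrSign, hχ₄, hJ]

theorem exists_prime_jacobiSym_eq_ite (S T : Finset ℤ)
    (hS : ∀ x ∈ S, x = -1 ∨ ∃ q : ℕ, q.Prime ∧ x = q) :
    ∃ p : ℕ, p.Prime ∧ Odd p ∧ ∀ x ∈ S, J(x | p) = if x ∈ T then 1 else -1 := by
  set σ : ℤ → ℤ := fun x => if x ∈ T then 1 else -1
  have hσ : ∀ x, σ x = 1 ∨ σ x = -1 := fun x => by by_cases hx : x ∈ T <;> simp [σ, hx]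
  obtain ⟨r, hr, hr₄, hr₈⟩ := exists_odd_χ₄_χ₈_eq (hσ (-1)) (hσ 2)
  set Q := (S.image Int.toNat).filter fun q => q.Prime ∧ q ≠ 2
  have hQ : ∀ q ∈ Q, q.Prime ∧ q ≠ 2 := fun q hq => (Finset.mem_filter.mp hq).2
  have hQ_odd : ∀ q ∈ Q, Odd q := fun q hq => (hQ q hq).1.odd_of_ne_two (hQ q hq).2
  -- the reciprocity sign only depends on `p` modulo `4`, so it can be built into the targets
  have htarget : ∀ q ∈ Q, ∃ a : ℕ, a.Coprime q ∧ J(a | q) = qrSign r q * σ q := by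
    intro q hq
    refine (hQ q hq).1.exists_coprime_jacobiSym_eq (hQ q hq).2 ?_
    rw [qrSign.neg_one_pow hr (hQ_odd q hq)]
    rcases neg_one_pow_eq_or ℤ (r / 2 * (q / 2)) with h | h <;> rcases hσ q with h' | h' <;>
      simp [h, h']
  choose! a ha_coprime ha using htarget
  obtain ⟨p, hp, hpr, hpa⟩ := Nat.exists_prime_modEq_eight_and_modEq hQ hr a ha_coprime
  have hp_odd : Odd p :=
    Nat.odd_iff.mpr (Eq.trans (hpr.of_dvd (by norm_num : 2 ∣ 8)) (Nat.odd_iff.mp hr))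
  have hpr₄ : p ≡ r [MOD 4] := hpr.of_dvd (by norm_num)
  refine ⟨p, hp, hp_odd, fun x hx => ?_⟩
  rcases hS x hx with rfl | ⟨q, hq, rfl⟩
  · rw [jacobiSym.at_neg_one hp_odd, (ZMod.natCast_eq_natCast_iff p r 4).mpr hpr₄]
    exact hr₄
  · by_cases hq2 : q = 2
    · subst hq2
      rw [Nat.cast_ofNat, jacobiSym.at_two hp_odd, (ZMod.natCast_eq_natCast_iff p r 8).mpr hpr]
      exact hr₈
    · have hqQ : q ∈ Q := Finset.mem_filter.mpr ⟨Finset.mem_image.mpr ⟨q, hx, by simp⟩, hq, hq2⟩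
      rw [jacobiSym_eq_qrSign_mul_of_modEq hp_odd (hQ_odd q hqQ) hpr₄ (hpa q hqQ), ha q hqQ,
        ← mul_assoc, ← sq, qrSign.sq_eq_one hr (hQ_odd q hqQ), one_mul]

theorem stmt19 (F₁ F₂ : Finset ℤ)
    (h1 : ∀ x ∈ F₁, x = -1 ∨ ∃ p : ℕ, p.Prime ∧ x = (p : ℤ))
    (h2 : ∀ x ∈ F₂, x = -1 ∨ ∃ p : ℕ, p.Prime ∧ x = (p : ℤ))
    (hdisj : Disjoint F₁ F₂) :
    ∃ p : ℕ, p.Prime ∧ Odd p ∧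
      (∀ x ∈ F₁ ∪ F₂, ¬ (p : ℤ) ∣ x) ∧
      (∀ x ∈ F₁, ∃ y : ZMod p, y ^ 2 = (x : ZMod p)) ∧
      (∀ x ∈ F₂, ¬ ∃ y : ZMod p, y ^ 2 = (x : ZMod p)) := by
  obtain ⟨p, hp, hp_odd, hJ⟩ := exists_prime_jacobiSym_eq_ite (F₁ ∪ F₂) F₁ fun x hx =>
    (Finset.mem_union.mp hx).elim (h1 x) (h2 x)
  have := Fact.mk hp
  have hJ₂ : ∀ x ∈ F₂, J(x | p) = -1 := fun x hx => by
    rw [hJ x (Finset.mem_union_right F₁ hx), if_neg (Finset.disjoint_right.mp hdisj hx)]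
  refine ⟨p, hp, hp_odd, fun x hx => ?_, fun x hx => ?_, fun x hx ⟨y, hy⟩ => ?_⟩
  · have hJ0 : J(x | p) ≠ 0 := by rw [hJ x hx]; split_ifs <;> decide
    rwa [← jacobiSym.legendreSym.to_jacobiSym, Ne, legendreSym.eq_zero_iff,
      ZMod.intCast_zmod_eq_zero_iff_dvd] at hJ0
  · obtain ⟨y, hy⟩ := (isSquare_iff_exists_sq _).mp <|
      ZMod.isSquare_of_jacobiSym_eq_one (by rw [hJ x (Finset.mem_union_left F₂ hx), if_pos hx])
    exact ⟨y, hy.symm⟩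
  · exact ZMod.nonsquare_of_jacobiSym_eq_neg_one (hJ₂ x hx) ⟨y, by rw [← hy, sq]⟩
end
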